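/- arXiv:dg-ga/9710029 — 2 statements merged into one kernel-verified Lean document; each statement's English description precedes it below -/
import Mathlib

section
/- In the quotient ring V = ℂ[α,β,γ]/J_g (with J_g the ideal of the recursively defined relations R_g^1, R_g^2, R_g^3 as above), the polynomial ∏_{r=1}^{g} (β + (−1)^r·8) lies in the ideal J_g + (γ). Hence the eigenvalues of multiplication by β on V are contained in {8, −8}. -/
open MvPolynomial

noncomputable section

abbrev R3 : Type := MvPolynomial (Fin 3) ℂ

def al : R3 := X 0
def be : R3 := X 1
def ga : R3 := X 2

def Rrel : ℕ → R3 × R3 × R3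
  | 0 => (1, 0, 0)
  | (r + 1) =>
    let p := Rrel r
    (al * p.1 + (r : R3) ^ 2 * p.2.1,
     (be + (-1) ^ (r + 1) * 8) * p.1 + C ((2 * (r : ℂ)) / ((r : ℂ) + 1)) * p.2.2,
     ga * p.1)

def J (g : ℕ) : Ideal R3 := Ideal.span {(Rrel g).1, (Rrel g).2.1, (Rrel g).2.2}

lemma Rrel_succ_1 (r : ℕ) : (Rrel (r+1)).1 = al * (Rrel r).1 + (r : R3) ^ 2 * (Rrel r).2.1 := rfl
lemma Rrel_succ_2 (r : ℕ) : (Rrel (r+1)).2.1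
    = (be + (-1) ^ (r + 1) * 8) * (Rrel r).1
      + C ((2 * (r : ℂ)) / ((r : ℂ) + 1)) * (Rrel r).2.2 := rfl
lemma Rrel_succ_3 (r : ℕ) : (Rrel (r+1)).2.2 = ga * (Rrel r).1 := rfl

lemma mem_J_1 (g : ℕ) : (Rrel g).1 ∈ J g := Ideal.subset_span (by simp)
lemma mem_J_2 (g : ℕ) : (Rrel g).2.1 ∈ J g := Ideal.subset_span (by simp)
lemma mem_J_3 (g : ℕ) : (Rrel g).2.2 ∈ J g := Ideal.subset_span (by simp)

lemma cancelC {I : Ideal R3} {c : ℂ} (hc : c ≠ 0) {x : R3} (h : C c * x ∈ I) : x ∈ I := by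
  have e : (C c⁻¹ : R3) * (C c * x) = x := by
    rw [← mul_assoc, ← map_mul, inv_mul_cancel₀ hc, map_one, one_mul]
  rw [← e]; exact I.mul_mem_left _ h

lemma gamma_pow_mem (g : ℕ) : ∀ k, k ≤ g →
    ga ^ k * (Rrel (g - k)).1 ∈ J g ∧ ga ^ k * (Rrel (g - k)).2.1 ∈ J g ∧
    ga ^ k * (Rrel (g - k)).2.2 ∈ J g := by
  intro k
  induction k with
  | zero => intro _; simpa using ⟨mem_J_1 g, mem_J_2 g, mem_J_3 g⟩
  | succ k ih =>
    intro hk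
    obtain ⟨h1, h2, h3⟩ := ih (by omega)
    set m := g - (k + 1) with hm
    have hgk : g - k = m + 1 := by omega
    rw [hgk, Rrel_succ_1] at h1
    rw [hgk, Rrel_succ_2] at h2
    rw [hgk, Rrel_succ_3] at h3
    have g1 : ga ^ (k+1) * (Rrel m).1 ∈ J g := by
      have e : ga ^ (k+1) * (Rrel m).1 = ga ^ k * (ga * (Rrel m).1) := by ring
      rw [e]; exact h3
    refine ⟨g1, ?_, ?_⟩
    · rcases Nat.eq_zero_or_pos m with h0 | hpos
      · rw [h0]; simp [Rrel]
      · have hA : ga * (ga ^ k * (al * (Rrel m).1 + (m : R3) ^ 2 * (Rrel m).2.1)) ∈ J g :=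
          (J g).mul_mem_left _ h1
        have hB : al * (ga ^ (k+1) * (Rrel m).1) ∈ J g := (J g).mul_mem_left _ g1
        have hsub : C ((m : ℂ) ^ 2) * (ga ^ (k+1) * (Rrel m).2.1)
            = ga * (ga ^ k * (al * (Rrel m).1 + (m : R3) ^ 2 * (Rrel m).2.1))
              - al * (ga ^ (k+1) * (Rrel m).1) := by
          rw [map_pow, map_natCast (C : ℂ →+* R3)]; ring
        have := Ideal.sub_mem _ hA hB
        rw [← hsub] at this
        exact cancelC (pow_ne_zero 2 (Nat.cast_ne_zero.2 (by omega))) this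
    · rcases Nat.eq_zero_or_pos m with h0 | hpos
      · rw [h0]; simp [Rrel]
      · have hA : ga * (ga ^ k * ((be + (-1) ^ (m + 1) * 8) * (Rrel m).1
            + C ((2 * (m : ℂ)) / ((m : ℂ) + 1)) * (Rrel m).2.2)) ∈ J g :=
          (J g).mul_mem_left _ h2
        have hB : (be + (-1) ^ (m + 1) * 8) * (ga ^ (k+1) * (Rrel m).1) ∈ J g :=
          (J g).mul_mem_left _ g1
        have hsub : C ((2 * (m : ℂ)) / ((m : ℂ) + 1)) * (ga ^ (k+1) * (Rrel m).2.2)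
            = ga * (ga ^ k * ((be + (-1) ^ (m + 1) * 8) * (Rrel m).1
                + C ((2 * (m : ℂ)) / ((m : ℂ) + 1)) * (Rrel m).2.2))
              - (be + (-1) ^ (m + 1) * 8) * (ga ^ (k+1) * (Rrel m).1) := by ring
        have := Ideal.sub_mem _ hA hB
        rw [← hsub] at this
        have hm0 : (m : ℂ) ≠ 0 := Nat.cast_ne_zero.2 (by omega)
        have hm1 : ((m : ℂ) + 1) ≠ 0 := by
          have : ((m + 1 : ℕ) : ℂ) ≠ 0 := Nat.cast_ne_zero.2 (Nat.succ_ne_zero m)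
          push_cast at this; exact this
        exact cancelC (div_ne_zero (by simpa using hm0) hm1) this

lemma gamma_pow_g (g : ℕ) : ga ^ g ∈ J g := by
  have := (gamma_pow_mem g g le_rfl).1
  simpa [Rrel] using this

def F (r : ℕ) : R3 := be + (-1) ^ r * 8

def U (g k : ℕ) : R3 := (∏ r ∈ Finset.Icc (k+1) g, F r) * (Rrel k).1

lemma L1 (k : ℕ) : (Rrel (k+1)).2.1 - F (k+1) * (Rrel k).1 ∈ Ideal.span {ga} := by
  rw [Rrel_succ_2]
  cases k with
  | zero => simp [Rrel, F]
  | succ j =>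
    have : (be + (-1) ^ (j + 1 + 1) * 8) * (Rrel (j+1)).1
        + C ((2 * ((j+1 : ℕ) : ℂ)) / (((j+1 : ℕ) : ℂ) + 1)) * (Rrel (j+1)).2.2
        - F (j + 1 + 1) * (Rrel (j+1)).1
        = (C ((2 * ((j+1 : ℕ) : ℂ)) / (((j+1 : ℕ) : ℂ) + 1)) * (Rrel j).1) * ga := by
      rw [Rrel_succ_3, F]; ring
    rw [this]
    exact Ideal.mul_mem_left _ _ (Ideal.subset_span rfl)

lemma Icc_insert (a g : ℕ) (h : a ≤ g) :
    Finset.Icc a g = insert a (Finset.Icc (a+1) g) := by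
  ext x; simp [Finset.mem_Icc]; omega

lemma prod_F_split (a g : ℕ) (h : a ≤ g) :
    (∏ r ∈ Finset.Icc a g, F r) = F a * ∏ r ∈ Finset.Icc (a+1) g, F r := by
  rw [Icc_insert a g h, Finset.prod_insert (by simp)]

lemma U_mem (g : ℕ) (hg : 1 ≤ g) : ∀ m, m ≤ g → U g (g - m) ∈ J g + Ideal.span {ga} := by
  have hJ : J g ≤ J g + Ideal.span {ga} := le_sup_left
  have hga : Ideal.span {ga} ≤ J g + Ideal.span {ga} := le_sup_right
  set K := J g + Ideal.span {ga} with hK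
  intro m
  induction m using Nat.strong_induction_on with
  | _ m ih =>
    match m with
    | 0 =>
      intro _
      have : Finset.Icc (g - 0 + 1) g = ∅ := Finset.Icc_eq_empty (by omega)
      rw [U, this, Finset.prod_empty, one_mul]
      simpa using hJ (mem_J_1 g)
    | 1 =>
      intro h1
      have hgg : g - 1 + 1 = g := by omega
      have hIcc : Finset.Icc (g - 1 + 1) g = {g} := by rw [hgg, Finset.Icc_self]
      rw [U, hIcc, Finset.prod_singleton]
      have hL := L1 (g - 1)
      rw [hgg] at hL
      have h2 : (Rrel g).2.1 ∈ K := hJ (mem_J_2 g)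
      have : F g * (Rrel (g-1)).1 = (Rrel g).2.1 - ((Rrel g).2.1 - F g * (Rrel (g-1)).1) := by
        ring
      rw [this]
      exact Ideal.sub_mem _ h2 (hga hL)
    | (n + 2) =>
      intro hle
      set k := g - (n + 1) with hk
      have hk1 : 1 ≤ k := by omega
      have ekm : g - (n + 2) = k - 1 := by omega
      have ekp : g - n = k + 1 := by omega
      have e1 : U g (k + 1) ∈ K := by rw [← ekp]; exact ih n (by omega) (by omega)
      have e2 : U g k ∈ K := ih (n + 1) (by omega) (by omega)
      -- P1 := ∏_{Icc (k+1) g}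
      have hkg : k + 1 ≤ g := by omega
      have hsplit : (∏ r ∈ Finset.Icc (k+1) g, F r)
          = F (k+1) * ∏ r ∈ Finset.Icc (k+2) g, F r := prod_F_split (k+1) g hkg
      -- F(k+1) * U (k+1) = P1 * R1_{k+1}
      have hA : (∏ r ∈ Finset.Icc (k+1) g, F r) * (Rrel (k+1)).1 ∈ K := by
        have := Ideal.mul_mem_left _ (F (k+1)) e1
        rw [U] at this
        rw [hsplit]
        have e : F (k+1) * ((∏ r ∈ Finset.Icc (k+1+1) g, F r) * (Rrel (k+1)).1)
            = F (k+1) * (∏ r ∈ Finset.Icc (k+2) g, F r) * (Rrel (k+1)).1 := by ring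
        rw [e] at this; exact this
      have hB : al * U g k ∈ K := Ideal.mul_mem_left _ _ e2
      have hC : (k : R3) ^ 2 * ((∏ r ∈ Finset.Icc (k+1) g, F r) * (Rrel k).2.1) ∈ K := by
        have hsub : (k : R3) ^ 2 * ((∏ r ∈ Finset.Icc (k+1) g, F r) * (Rrel k).2.1)
            = (∏ r ∈ Finset.Icc (k+1) g, F r) * (Rrel (k+1)).1 - al * U g k := by
          rw [Rrel_succ_1, U]; ring
        rw [hsub]; exact Ideal.sub_mem _ hA hB
      -- replace R2_k by F k * R1_{k-1} modulo ga
      have hL := L1 (k - 1)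
      rw [Nat.sub_add_cancel hk1] at hL
      have hD : (k : R3) ^ 2 * ((∏ r ∈ Finset.Icc (k+1) g, F r)
          * ((Rrel k).2.1 - F k * (Rrel (k-1)).1)) ∈ K :=
        hga (Ideal.mul_mem_left _ _ (Ideal.mul_mem_left _ _ hL))
      have hE : (k : R3) ^ 2 * ((∏ r ∈ Finset.Icc (k+1) g, F r) * (F k * (Rrel (k-1)).1)) ∈ K := by
        have e : (k : R3) ^ 2 * ((∏ r ∈ Finset.Icc (k+1) g, F r) * (F k * (Rrel (k-1)).1))
            = (k : R3) ^ 2 * ((∏ r ∈ Finset.Icc (k+1) g, F r) * (Rrel k).2.1)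
              - (k : R3) ^ 2 * ((∏ r ∈ Finset.Icc (k+1) g, F r)
                  * ((Rrel k).2.1 - F k * (Rrel (k-1)).1)) := by ring
        rw [e]; exact Ideal.sub_mem _ hC hD
      have hF : C ((k : ℂ) ^ 2) * U g (k - 1) ∈ K := by
        have hsplit2 : (∏ r ∈ Finset.Icc k g, F r)
            = F k * ∏ r ∈ Finset.Icc (k+1) g, F r := prod_F_split k g (by omega)
        have e : C ((k : ℂ) ^ 2) * U g (k - 1)
            = (k : R3) ^ 2 * ((∏ r ∈ Finset.Icc (k+1) g, F r) * (F k * (Rrel (k-1)).1)) := by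
          rw [U, Nat.sub_add_cancel hk1, hsplit2, map_pow, map_natCast (C : ℂ →+* R3)]; ring
        rw [e]; exact hE
      rw [ekm]
      exact cancelC (pow_ne_zero 2 (Nat.cast_ne_zero.2 (by omega))) hF

lemma part1 (g : ℕ) (hg : 1 ≤ g) :
    (∏ r ∈ Finset.Icc 1 g, (be + (-1) ^ r * 8)) ∈ J g + Ideal.span {ga} := by
  have := U_mem g hg g le_rfl
  rw [Nat.sub_self] at this
  rw [U] at this
  simpa [Rrel, F] using this

lemma smul_act (g : ℕ) (c : ℂ) (v : R3 ⧸ J g) :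
    Ideal.Quotient.mk (J g) (C c) * v = c • v := by
  obtain ⟨w, rfl⟩ := Ideal.Quotient.mk_surjective v
  rw [← map_mul, ← smul_eq_C_mul]
  exact rfl

lemma pow_act {A : Type*} [CommRing A] [Module ℂ A] [SMulCommClass ℂ A A] (x v : A) (c : ℂ)
    (h : x * v = c • v) : ∀ n : ℕ, x ^ n * v = c ^ n • v := by
  intro n
  induction n with
  | zero => simp
  | succ n ih =>
    rw [pow_succ, mul_assoc, h, mul_smul_comm, ih, smul_smul, ← pow_succ']

theorem stmt5 (g : ℕ) (hg : 1 ≤ g) :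
    (∏ r ∈ Finset.Icc 1 g, (be + (-1) ^ r * 8)) ∈ J g + Ideal.span {ga} ∧
    ∀ μ : ℂ, Module.End.HasEigenvalue
      (LinearMap.mulLeft ℂ (Ideal.Quotient.mk (J g) be)) μ → μ = 8 ∨ μ = -8 := by
  refine ⟨part1 g hg, ?_⟩
  intro μ hμ
  obtain ⟨v, hv⟩ := hμ.exists_hasEigenvector
  have hv0 : v ≠ 0 := hv.2
  have hbe : Ideal.Quotient.mk (J g) be * v = μ • v := by
    have := hv.apply_eq_smul
    rwa [LinearMap.mulLeft_apply] at this
  set mk := Ideal.Quotient.mk (J g) with hmk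
  -- each factor acts as a scalar
  have hfac : ∀ r : ℕ, mk (be + (-1) ^ r * 8) * v = (μ + (-1) ^ r * 8) • v := by
    intro r
    have hc : ((-1 : R3) ^ r * 8) = C ((-1 : ℂ) ^ r * 8) := by
      rw [map_mul, map_pow, map_neg, map_one, map_ofNat]
    rw [map_add, add_mul, hbe, hc, smul_act, add_smul]
  -- the product acts as the scalar product
  have hprod : ∀ s : Finset ℕ,
      mk (∏ r ∈ s, (be + (-1) ^ r * 8)) * v = (∏ r ∈ s, (μ + (-1) ^ r * 8)) • v := by
    intro s
    induction s using Finset.induction_on with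
    | empty => simp
    | insert _ _ hns ih =>
      rename_i a s'
      rw [Finset.prod_insert hns, Finset.prod_insert hns, map_mul, mul_assoc, ih,
        mul_smul_comm, hfac, smul_smul]
      rw [mul_comm]
  -- mk of the product is mk q * mk ga for some q
  have hPmem := part1 g hg
  rw [Submodule.add_eq_sup] at hPmem
  obtain ⟨p, hp, q', hq', hsum⟩ := Submodule.mem_sup.mp hPmem
  obtain ⟨q, hq⟩ := Ideal.mem_span_singleton'.mp hq'
  have hmkP : mk (∏ r ∈ Finset.Icc 1 g, (be + (-1) ^ r * 8)) = mk q * mk ga := by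
    rw [← hsum, map_add, Ideal.Quotient.eq_zero_iff_mem.mpr hp, zero_add, ← hq, map_mul]
  -- the g-th power of mk of the product is zero
  have hzero : (mk (∏ r ∈ Finset.Icc 1 g, (be + (-1) ^ r * 8))) ^ g = 0 := by
    rw [hmkP, mul_pow, ← map_pow, ← map_pow, Ideal.Quotient.eq_zero_iff_mem.mpr (gamma_pow_g g),
      mul_zero]
  have hcv := pow_act (mk (∏ r ∈ Finset.Icc 1 g, (be + (-1) ^ r * 8))) v
    (∏ r ∈ Finset.Icc 1 g, (μ + (-1) ^ r * 8)) (hprod _) g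
  rw [hzero, zero_mul] at hcv
  have hc0 : (∏ r ∈ Finset.Icc 1 g, (μ + (-1) ^ r * 8)) ^ g = 0 := by
    by_contra hne
    exact hv0 (by rw [← inv_smul_smul₀ hne v, ← hcv, smul_zero])
  have hc : (∏ r ∈ Finset.Icc 1 g, (μ + (-1) ^ r * 8)) = 0 :=
    pow_eq_zero_iff (by omega) |>.mp hc0
  obtain ⟨r, _, hr⟩ := Finset.prod_eq_zero_iff.mp hc
  rcases Nat.even_or_odd r with he | ho
  · right
    have h1 : ((-1 : ℂ)) ^ r = 1 := he.neg_one_pow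
    rw [h1] at hr; linear_combination hr
  · left
    have h1 : ((-1 : ℂ)) ^ r = -1 := ho.neg_one_pow
    rw [h1] at hr; linear_combination hr
end
end

section
/- Let ζ_r ∈ ℂ[α,β,γ] be defined by ζ_0 = 1, ζ_1 = α, ζ_{r+1} = α·ζ_r + r²·(β + (−1)^r·8)·ζ_{r−1} + 2r(r−1)·γ·ζ_{r−2}. Then the ideal (ζ_g, ζ_{g+1}, ζ_{g+2}) equals the ideal J_g = (R_g^1, R_g^2, R_g^3), where R_r^i satisfy the recursion R_0^1 = 1, R_0^2 = 0, R_0^3 = 0, R_{r+1}^1 = α·R_r^1 + r²·R_r^2, R_{r+1}^2 = (β + (−1)^{r+1}8)·R_r^1 + (2r/(r+1))·R_r^3, R_{r+1}^3 = γ·R_r^1. -/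
open MvPolynomial

noncomputable section

def zeta3 : ℕ → R3
  | 0 => 1
  | 1 => al
  | 2 => al * zeta3 1 + (be + (-1) ^ 1 * 8) * zeta3 0
  | (n + 3) => al * zeta3 (n + 2)
      + ((n : R3) + 2) ^ 2 * (be + (-1) ^ (n + 2) * 8) * zeta3 (n + 1)
      + 2 * ((n : R3) + 2) * ((n : R3) + 1) * ga * zeta3 n

/-!
Unwinding the recursion for `R` twice shows `ζ_r = R_r^1`, together with
`ζ_{g+1} = α ζ_g + g² R_g^2` and
`ζ_{g+2} = α ζ_{g+1} + (g+1)²(β + (-1)^{g+1} 8) ζ_g + 2g(g+1) R_g^3`.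
So the two generating triples differ by a triangular matrix whose diagonal entries
`1, g², 2g(g+1)` are units of `ℂ[α,β,γ]` once `g ≥ 1`.
-/

theorem Ideal.span_triple_eq_of_unitriangular {R : Type*} [CommRing R] {a b c b' c' : R}
    (x y z : R) {u v : R} (hu : IsUnit u) (hv : IsUnit v)
    (hb : b' = x * a + u * b) (hc : c' = y * b' + z * a + v * c) :
    Ideal.span {a, b', c'} = Ideal.span {a, b, c} := by
  obtain ⟨u, rfl⟩ := hu
  obtain ⟨v, rfl⟩ := hv
  apply le_antisymm <;>
    simp only [Ideal.span_le, Set.insert_subset_iff, Set.singleton_subset_iff, SetLike.mem_coe]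
  · have ha : a ∈ Ideal.span {a, b, c} := Ideal.subset_span (by simp)
    have hb_mem : b ∈ Ideal.span {a, b, c} := Ideal.subset_span (by simp)
    have hc_mem : c ∈ Ideal.span {a, b, c} := Ideal.subset_span (by simp)
    have hb'_mem : b' ∈ Ideal.span {a, b, c} := by
      rw [hb]; exact add_mem (Ideal.mul_mem_left _ _ ha) (Ideal.mul_mem_left _ _ hb_mem)
    refine ⟨ha, hb'_mem, ?_⟩
    rw [hc]
    exact add_mem (add_mem (Ideal.mul_mem_left _ _ hb'_mem) (Ideal.mul_mem_left _ _ ha))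
      (Ideal.mul_mem_left _ _ hc_mem)
  · have ha : a ∈ Ideal.span {a, b', c'} := Ideal.subset_span (by simp)
    have hb'_mem : b' ∈ Ideal.span {a, b', c'} := Ideal.subset_span (by simp)
    have hc'_mem : c' ∈ Ideal.span {a, b', c'} := Ideal.subset_span (by simp)
    have hb_eq : b = ↑u⁻¹ * b' - ↑u⁻¹ * x * a := by
      linear_combination (↑u⁻¹ : R) * hb.symm - b * u.inv_mul
    have hc_eq : c = ↑v⁻¹ * c' - ↑v⁻¹ * y * b' - ↑v⁻¹ * z * a := by
      linear_combination (↑v⁻¹ : R) * hc.symm - c * v.inv_mul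
    refine ⟨ha, ?_, ?_⟩
    · rw [hb_eq]
      exact sub_mem (Ideal.mul_mem_left _ _ hb'_mem) (Ideal.mul_mem_left _ _ ha)
    · rw [hc_eq]
      exact sub_mem (sub_mem (Ideal.mul_mem_left _ _ hc'_mem) (Ideal.mul_mem_left _ _ hb'_mem))
        (Ideal.mul_mem_left _ _ ha)

lemma Rrel_fst_succ (r : ℕ) :
    (Rrel (r + 1)).1 = al * (Rrel r).1 + C ((r : ℂ) ^ 2) * (Rrel r).2.1 := by
  simp [Rrel]

lemma Rrel_fst_add_two (r : ℕ) :
    (Rrel (r + 2)).1 = al * (Rrel (r + 1)).1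
      + ((r : R3) + 1) ^ 2 * (be + (-1) ^ (r + 1) * 8) * (Rrel r).1
      + C (2 * (r : ℂ) * (r + 1)) * (Rrel r).2.2 := by
  have hcoeff : ((r : R3) + 1) ^ 2 * C (2 * (r : ℂ) / (r + 1)) = C (2 * (r : ℂ) * (r + 1)) := by
    have hr : (r : ℂ) + 1 ≠ 0 := by exact_mod_cast r.succ_ne_zero
    rw [show (r : R3) + 1 = C ((r : ℂ) + 1) by simp, ← C_pow, ← C_mul]
    congr 1
    field_simp
  have hsnd : (Rrel (r + 1)).2.1
      = (be + (-1) ^ (r + 1) * 8) * (Rrel r).1 + C (2 * (r : ℂ) / (r + 1)) * (Rrel r).2.2 := rfl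
  rw [Rrel_fst_succ (r + 1), hsnd]
  simp only [Nat.cast_succ, map_pow, map_add, map_natCast, map_one]
  linear_combination (Rrel r).2.2 * hcoeff

lemma zeta3_eq_Rrel_fst : ∀ r, zeta3 r = (Rrel r).1
  | 0 => rfl
  | 1 => by simp [zeta3, Rrel]
  | 2 => by simp [zeta3, Rrel]
  | n + 3 => by
    rw [zeta3, Rrel_fst_add_two (n + 1), show (Rrel (n + 1)).2.2 = ga * (Rrel n).1 from rfl,
      zeta3_eq_Rrel_fst (n + 2), zeta3_eq_Rrel_fst (n + 1), zeta3_eq_Rrel_fst n]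
    simp only [map_mul, map_add, map_natCast, map_ofNat, map_one]
    push_cast
    ring

theorem stmt17 (g : ℕ) (hg : 1 ≤ g) :
    Ideal.span {zeta3 g, zeta3 (g + 1), zeta3 (g + 2)} = J g := by
  have hg0 : (g : ℂ) ≠ 0 := by exact_mod_cast (show g ≠ 0 by omega)
  have hg1 : (g : ℂ) + 1 ≠ 0 := by exact_mod_cast g.succ_ne_zero
  rw [J, zeta3_eq_Rrel_fst, zeta3_eq_Rrel_fst, zeta3_eq_Rrel_fst]
  exact Ideal.span_triple_eq_of_unitriangular _ _ _
    ((isUnit_iff_ne_zero.2 (pow_ne_zero 2 hg0)).map C)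
    ((isUnit_iff_ne_zero.2 (mul_ne_zero (mul_ne_zero two_ne_zero hg0) hg1)).map C)
    (Rrel_fst_succ g) (Rrel_fst_add_two g)
end
end
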